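/- Decomposable loss closed-form for GW distance averaging: suppose the loss decomposes as L(a,b) = f₁(a) + f₂(b) − h₁(a)h₂(b), the blocks Γ^ℓ_{ij} ∈ S₊^d satisfy Σ_j Γ^ℓ_{ij} = P̄_i and Σ_i Γ^ℓ_{ij} = P^ℓ_j, and weights ω_ℓ ≥ 0 sum to 1. Then the objective Σ_ℓ ω_ℓ Σ_{i,i',j,j'} L(D_{i,i'}, D^ℓ_{j,j'}) tr(Γ^ℓ_{ij} Γ^ℓ_{i'j'}), viewed as a function of the symmetric nonnegative matrix D, has partial derivative with respect to D_{i,i'} equal to f₁'(D_{i,i'}) tr(P̄_i P̄_{i'}) − h₁'(D_{i,i'}) Σ_ℓ ω_ℓ tr(Σ_j Γ^ℓ_{ij} Σ_{j'} h₂(D^ℓ_{j,j'}) Γ^ℓ_{i',j'}); hence a stationary point satisfies f₁'(D_{i,i'})/h₁'(D_{i,i'}) = (Σ_ℓ ω_ℓ tr(Σ_j Γ^ℓ_{ij} Σ_{j'} h₂(D^ℓ_{j,j'}) Γ^ℓ_{i',j'})) / tr(P̄_i P̄_{i'}), provided tr(P̄_i P̄_{i'}) ≠ 0. -/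

import Mathlib

/-! The objective is affine in `f₁ s` and `h₁ s`: the `f₁`-part is multiplied by
`∑ ℓ, ω ℓ * ∑ j j', tr(Γ^ℓ_{ij} Γ^ℓ_{i'j'})`, which by the row marginals is
`∑ ℓ, ω ℓ * tr(P̄_i P̄_{i'}) = tr(P̄_i P̄_{i'})`. Differentiating in `s` and solving the
stationarity equation for `f₁' / h₁'` gives the closed form. -/

open Finset

namespace Matrix

variable {n ι κ R : Type*} [Fintype n] [Fintype ι] [Fintype κ]

theorem trace_sum_mul_sum [Semiring R] (A : ι → Matrix n n R) (B : κ → Matrix n n R) :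
    ((∑ i, A i) * ∑ j, B j).trace = ∑ i, ∑ j, (A i * B j).trace := by
  simp only [sum_mul_sum, trace_sum]

theorem trace_sum_mul_sum_smul [CommSemiring R] (A : ι → Matrix n n R) (B : κ → Matrix n n R)
    (c : ι → κ → R) :
    (∑ i, A i * ∑ j, c i j • B j).trace = ∑ i, ∑ j, c i j * (A i * B j).trace := by
  simp only [trace_sum, Matrix.mul_sum, Matrix.mul_smul, trace_smul, smul_eq_mul]

end Matrix

theorem sum_weighted_decomposable_loss {ι κ R : Type*} [Fintype ι] [Fintype κ] [CommRing R]
    (ω : ι → R) (hω : ∑ ℓ, ω ℓ = 1) (a b A : R) (g h T : ι → κ → κ → R)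
    (hT : ∀ ℓ, ∑ j, ∑ j', T ℓ j j' = A) :
    ∑ ℓ, ω ℓ * ∑ j, ∑ j', (a + g ℓ j j' - b * h ℓ j j') * T ℓ j j' =
      a * A + (∑ ℓ, ω ℓ * ∑ j, ∑ j', g ℓ j j' * T ℓ j j') -
        b * ∑ ℓ, ω ℓ * ∑ j, ∑ j', h ℓ j j' * T ℓ j j' := by
  have hsplit : ∀ ℓ, ∑ j, ∑ j', (a + g ℓ j j' - b * h ℓ j j') * T ℓ j j' =
      a * A + ∑ j, ∑ j', g ℓ j j' * T ℓ j j' - b * ∑ j, ∑ j', h ℓ j j' * T ℓ j j' := by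
    intro ℓ
    simp only [← hT ℓ, mul_sum, ← sum_add_distrib, ← sum_sub_distrib]
    exact sum_congr rfl fun _ _ => sum_congr rfl fun _ _ => by ring
  simp only [hsplit, mul_sub, mul_add, sum_sub_distrib, sum_add_distrib, ← sum_mul, hω,
    mul_sum, mul_left_comm b]
  ring

theorem stmt13_general {d m nJ K : ℕ}
    (f₁ f₂ h₁ h₂ f₁' h₁' : ℝ → ℝ)
    (hf₁ : ∀ x, HasDerivAt f₁ (f₁' x) x) (hh₁ : ∀ x, HasDerivAt h₁ (h₁' x) x)
    (ω : Fin K → ℝ) (hωs : ∑ ℓ, ω ℓ = 1)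
    (D' : Fin K → Fin nJ → Fin nJ → ℝ)
    (Pbar : Fin m → Matrix (Fin d) (Fin d) ℝ)
    (Γ : Fin K → Fin m → Fin nJ → Matrix (Fin d) (Fin d) ℝ)
    (hrow : ∀ ℓ i, ∑ j, Γ ℓ i j = Pbar i)
    (i i' : Fin m) (t : ℝ) :
    HasDerivAt
      (fun s => ∑ ℓ, ω ℓ * ∑ j, ∑ j',
        (f₁ s + f₂ (D' ℓ j j') - h₁ s * h₂ (D' ℓ j j')) * (Γ ℓ i j * Γ ℓ i' j').trace)
      (f₁' t * (Pbar i * Pbar i').trace -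
        h₁' t * ∑ ℓ, ω ℓ * (∑ j, (Γ ℓ i j * ∑ j', h₂ (D' ℓ j j') • Γ ℓ i' j')).trace) t ∧
    ((f₁' t * (Pbar i * Pbar i').trace -
        h₁' t * ∑ ℓ, ω ℓ * (∑ j, (Γ ℓ i j * ∑ j', h₂ (D' ℓ j j') • Γ ℓ i' j')).trace = 0) →
      (Pbar i * Pbar i').trace ≠ 0 → h₁' t ≠ 0 →
      f₁' t / h₁' t =
        (∑ ℓ, ω ℓ * (∑ j, (Γ ℓ i j * ∑ j', h₂ (D' ℓ j j') • Γ ℓ i' j')).trace) /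
          (Pbar i * Pbar i').trace) := by
  set A := (Pbar i * Pbar i').trace
  set B := ∑ ℓ, ω ℓ * (∑ j, (Γ ℓ i j * ∑ j', h₂ (D' ℓ j j') • Γ ℓ i' j')).trace
  have hmarginal : ∀ ℓ, ∑ j, ∑ j', (Γ ℓ i j * Γ ℓ i' j').trace = A := fun ℓ => by
    rw [← Matrix.trace_sum_mul_sum, hrow, hrow]
  have hobjective : ∀ s, ∑ ℓ, ω ℓ * ∑ j, ∑ j',
      (f₁ s + f₂ (D' ℓ j j') - h₁ s * h₂ (D' ℓ j j')) * (Γ ℓ i j * Γ ℓ i' j').trace =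
      f₁ s * A + (∑ ℓ, ω ℓ * ∑ j, ∑ j', f₂ (D' ℓ j j') * (Γ ℓ i j * Γ ℓ i' j').trace) -
        h₁ s * B := fun s => by
    rw [sum_weighted_decomposable_loss ω hωs _ _ A _ _ _ hmarginal]
    simp only [B, Matrix.trace_sum_mul_sum_smul]
  refine ⟨?_, fun hstationary hA hh₁t => ?_⟩
  · simp only [hobjective]
    exact (((hf₁ t).mul_const A).add_const _).sub ((hh₁ t).mul_const B)
  · rw [div_eq_div_iff hh₁t hA]
    linarith

/-- Decomposable-loss closed form for Gromov–Wasserstein distance averaging: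
derivative of the averaged objective with respect to the entry D_{i,i'} (here the
real variable t), and the resulting stationarity equation. -/
theorem stmt13 {d m nJ K : ℕ}
    (f₁ f₂ h₁ h₂ f₁' h₁' : ℝ → ℝ)
    (hf₁ : ∀ x, HasDerivAt f₁ (f₁' x) x) (hh₁ : ∀ x, HasDerivAt h₁ (h₁' x) x)
    (ω : Fin K → ℝ) (hω : ∀ ℓ, 0 ≤ ω ℓ) (hωs : ∑ ℓ, ω ℓ = 1)
    (D' : Fin K → Fin nJ → Fin nJ → ℝ)
    (Pbar : Fin m → Matrix (Fin d) (Fin d) ℝ)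
    (Pl : Fin K → Fin nJ → Matrix (Fin d) (Fin d) ℝ)
    (Γ : Fin K → Fin m → Fin nJ → Matrix (Fin d) (Fin d) ℝ)
    (hΓ : ∀ ℓ i j, (Γ ℓ i j).PosSemidef)
    (hrow : ∀ ℓ i, ∑ j, Γ ℓ i j = Pbar i)
    (hcol : ∀ ℓ j, ∑ i, Γ ℓ i j = Pl ℓ j)
    (i i' : Fin m) (t : ℝ) :
    HasDerivAt
      (fun s => ∑ ℓ, ω ℓ * ∑ j, ∑ j',
        (f₁ s + f₂ (D' ℓ j j') - h₁ s * h₂ (D' ℓ j j')) * (Γ ℓ i j * Γ ℓ i' j').trace)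
      (f₁' t * (Pbar i * Pbar i').trace -
        h₁' t * ∑ ℓ, ω ℓ * (∑ j, (Γ ℓ i j * ∑ j', h₂ (D' ℓ j j') • Γ ℓ i' j')).trace) t ∧
    ((f₁' t * (Pbar i * Pbar i').trace -
        h₁' t * ∑ ℓ, ω ℓ * (∑ j, (Γ ℓ i j * ∑ j', h₂ (D' ℓ j j') • Γ ℓ i' j')).trace = 0) →
      (Pbar i * Pbar i').trace ≠ 0 → h₁' t ≠ 0 →
      f₁' t / h₁' t =
        (∑ ℓ, ω ℓ * (∑ j, (Γ ℓ i j * ∑ j', h₂ (D' ℓ j j') • Γ ℓ i' j')).trace) /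
          (Pbar i * Pbar i').trace) :=
  stmt13_general f₁ f₂ h₁ h₂ f₁' h₁' hf₁ hh₁ ω hωs D' Pbar Γ hrow i i' t
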